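/- The subspace W + σ(W) of H_ℂ is a two-sided ideal of the ℂ-algebra H_ℂ. Moreover W = H^{2,0} + H^{2,0}·H^{0,2} with H^{2,0}·H^{0,2} ⊆ H^{1,1}, so that W + σ(W) is the direct sum of its intersections with H^{2,0}, H^{1,1} and H^{0,2} (it is stable under the Hodge decomposition), and t(W + σ(W)) ⊆ W + σ(W). -/

import Mathlib

open scoped TensorProduct

noncomputable section

/-- Complex conjugation on `ℂ` as a `ℚ`-algebra homomorphism. -/
def conjQAlg : ℂ →ₐ[ℚ] ℂ := (Complex.conjAe.restrictScalars ℚ).toAlgHom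

variable (H : Type) [Ring H] [Algebra ℚ H] [FiniteDimensional ℚ H]

/-- The conjugate-linear involution of `H_ℂ = ℂ ⊗[ℚ] H` fixing `H`. -/
def sigmaC : ℂ ⊗[ℚ] H →ₗ[ℚ] ℂ ⊗[ℚ] H :=
  (Algebra.TensorProduct.map conjQAlg (AlgHom.id ℚ H)).toLinearMap

/-- The inclusion of `H` into `H_ℂ = ℂ ⊗[ℚ] H`. -/
def inclH : H →ₐ[ℚ] ℂ ⊗[ℚ] H := Algebra.TensorProduct.includeRight

/-- The data of a polarized weight 2 Hodge structure on a finite-dimensional `ℚ`-algebra `H`,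
compatible with the ring structure:
(i) a Hodge decomposition `H_ℂ = H^{2,0} ⊕ H^{1,1} ⊕ H^{0,2}` with `σ(H^{2,0}) = H^{0,2}`,
`σ(H^{1,1}) = H^{1,1}`;
(ii) a polarization: a symmetric `ℚ`-bilinear form `B` on `H` with `ℂ`-bilinear extension `BC`
to `H_ℂ`, whose associated Hermitian pairing `h(α,β) := BC α (σ β)` makes the Hodge pieces
pairwise orthogonal and is positive definite on `H^{2,0}`, `H^{0,2}` and negative definite on
`H^{1,1}`;
(iii) the product is a morphism of Hodge structures of bidegree `(-1,-1)`:
`H^{p,q}·H^{p',q'} ⊆ H^{p+p'-1,q+q'-1}`;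
(iv) an adjunction `t`: a `ℚ`-linear involution with `t(ab) = t(b)t(a)`,
`⟨ab,c⟩ = ⟨b, t(a)c⟩` and `⟨ab,c⟩ = ⟨a, c·t(b)⟩`. -/
structure HodgeAlgebraData where
  H20 : Submodule ℂ (ℂ ⊗[ℚ] H)
  H11 : Submodule ℂ (ℂ ⊗[ℚ] H)
  H02 : Submodule ℂ (ℂ ⊗[ℚ] H)
  sup_top : H20 ⊔ H11 ⊔ H02 = ⊤
  disj1 : H20 ⊓ (H11 ⊔ H02) = ⊥
  disj2 : H11 ⊓ H02 = ⊥
  sigma_20 : ∀ x ∈ H20, sigmaC H x ∈ H02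
  sigma_02 : ∀ x ∈ H02, sigmaC H x ∈ H20
  sigma_11 : ∀ x ∈ H11, sigmaC H x ∈ H11
  B : H →ₗ[ℚ] H →ₗ[ℚ] ℚ
  B_symm : ∀ a b : H, B a b = B b a
  BC : (ℂ ⊗[ℚ] H) →ₗ[ℂ] (ℂ ⊗[ℚ] H) →ₗ[ℂ] ℂ
  BC_extends : ∀ a b : H, BC (inclH H a) (inclH H b) = (B a b : ℂ)
  BC_symm : ∀ x y, BC x y = BC y x
  BC_conj : ∀ x y, BC (sigmaC H x) (sigmaC H y) = starRingEnd ℂ (BC x y)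
  orth_20_11 : ∀ x ∈ H20, ∀ y ∈ H11, BC x (sigmaC H y) = 0
  orth_20_02 : ∀ x ∈ H20, ∀ y ∈ H02, BC x (sigmaC H y) = 0
  orth_11_02 : ∀ x ∈ H11, ∀ y ∈ H02, BC x (sigmaC H y) = 0
  pos_20 : ∀ x ∈ H20, x ≠ 0 → 0 < (BC x (sigmaC H x)).re ∧ (BC x (sigmaC H x)).im = 0
  pos_02 : ∀ x ∈ H02, x ≠ 0 → 0 < (BC x (sigmaC H x)).re ∧ (BC x (sigmaC H x)).im = 0
  neg_11 : ∀ x ∈ H11, x ≠ 0 → (BC x (sigmaC H x)).re < 0 ∧ (BC x (sigmaC H x)).im = 0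
  mul_20_20 : ∀ x ∈ H20, ∀ y ∈ H20, x * y = 0
  mul_20_11 : ∀ x ∈ H20, ∀ y ∈ H11, x * y ∈ H20
  mul_11_20 : ∀ x ∈ H11, ∀ y ∈ H20, x * y ∈ H20
  mul_11_11 : ∀ x ∈ H11, ∀ y ∈ H11, x * y ∈ H11
  mul_20_02 : ∀ x ∈ H20, ∀ y ∈ H02, x * y ∈ H11
  mul_02_20 : ∀ x ∈ H02, ∀ y ∈ H20, x * y ∈ H11
  mul_02_02 : ∀ x ∈ H02, ∀ y ∈ H02, x * y = 0
  mul_11_02 : ∀ x ∈ H11, ∀ y ∈ H02, x * y ∈ H02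
  mul_02_11 : ∀ x ∈ H02, ∀ y ∈ H11, x * y ∈ H02
  t : H →ₗ[ℚ] H
  t_invol : ∀ a : H, t (t a) = a
  t_mul : ∀ a b : H, t (a * b) = t b * t a
  adj_left : ∀ a b c : H, B (a * b) c = B b (t a * c)
  adj_right : ∀ a b c : H, B (a * b) c = B a (c * t b)

variable {H}

/-- `W := H^{2,0}·H_ℂ`, the `ℂ`-linear span of all products `x·y` with `x ∈ H^{2,0}`,
`y ∈ H_ℂ`. -/
def HodgeAlgebraData.W (D : HodgeAlgebraData H) : Submodule ℂ (ℂ ⊗[ℚ] H) := D.H20 * ⊤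

/-- `σ(W)`, the image of `W` under the conjugation `σ`, as a `ℚ`-subspace of `H_ℂ`. -/
def HodgeAlgebraData.sigmaW (D : HodgeAlgebraData H) : Submodule ℚ (ℂ ⊗[ℚ] H) :=
  (D.W.restrictScalars ℚ).map (sigmaC H)

/-- The `ℂ`-linear extension of `t` to `H_ℂ`. -/
def HodgeAlgebraData.tC (D : HodgeAlgebraData H) : ℂ ⊗[ℚ] H →ₗ[ℂ] ℂ ⊗[ℚ] H :=
  LinearMap.baseChange ℂ D.t

/-! The three Hodge pieces multiply like a graded algebra shifted by `(-1,-1)`; in particular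
`H^{2,0}·H^{2,0} = 0`, so left multiplication by `H^{1,1}` preserves the right ideal `W` and left
multiplication by `H^{0,2}` lands in `H^{0,2}·H_ℂ = σ(H^{2,0}·H_ℂ)`. Since `σ` is multiplicative,
`W + σ(W)` is then a two-sided ideal.

As `t` reverses products, `t`-stability reduces to `t(H^{2,0}) ⊆ W + σ(W)`, i.e. to the
`H^{1,1}`-component `x₂` of `t(x)`, `x ∈ H^{2,0}`, lying in `H^{0,2}·H^{2,0}`. Writing
`1 = e₁ + e₂ + e₃` by type, the adjunction gives `⟨t(x), σ(n)⟩ = ⟨σ(n)·x, e₃⟩ = ⟨σ(n), e₃·x₁⟩`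
for `n ∈ H^{1,1}`, so `x₂` is `h`-orthogonal to the `h`-orthogonal complement of
`H^{0,2}·H^{2,0}` in `H^{1,1}`; as `-h` is positive definite on `H^{1,1}`, this complement of a
complement is `H^{0,2}·H^{2,0}` itself. -/

section Conjugation

variable {H : Type} [Ring H] [Algebra ℚ H]

@[simp]
lemma sigmaC_tmul (c : ℂ) (a : H) : sigmaC H (c ⊗ₜ[ℚ] a) = starRingEnd ℂ c ⊗ₜ[ℚ] a := rfl

@[simp]
lemma sigmaC_sigmaC (x : ℂ ⊗[ℚ] H) : sigmaC H (sigmaC H x) = x := by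
  induction x using TensorProduct.induction_on with
  | zero => simp
  | tmul c a => simp
  | add x y hx hy => simp [hx, hy]

lemma sigmaC_mul (x y : ℂ ⊗[ℚ] H) : sigmaC H (x * y) = sigmaC H x * sigmaC H y :=
  map_mul (Algebra.TensorProduct.map conjQAlg (AlgHom.id ℚ H)) x y

lemma sigmaC_smul (c : ℂ) (x : ℂ ⊗[ℚ] H) :
    sigmaC H (c • x) = starRingEnd ℂ c • sigmaC H x := by
  induction x using TensorProduct.induction_on with
  | zero => simp
  | tmul d a => simp [TensorProduct.smul_tmul']
  | add x y hx hy => simp [hx, hy]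

end Conjugation

lemma Submodule.le_mul_top {R A : Type*} [CommSemiring R] [Semiring A] [Algebra R A]
    (M : Submodule R A) : M ≤ M * ⊤ := by
  simpa using mul_le_mul_right (le_top : (1 : Submodule R A) ≤ ⊤) M

namespace HodgeAlgebraData

variable {H : Type} [Ring H] [Algebra ℚ H] (D : HodgeAlgebraData H)

lemma tC_tmul (c : ℂ) (a : H) : D.tC (c ⊗ₜ[ℚ] a) = c ⊗ₜ[ℚ] D.t a := rfl

lemma tC_mul (x y : ℂ ⊗[ℚ] H) : D.tC (x * y) = D.tC y * D.tC x := by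
  induction x using TensorProduct.induction_on with
  | zero => simp
  | add x x' hx hx' => simp [add_mul, mul_add, hx, hx']
  | tmul c a =>
    induction y using TensorProduct.induction_on with
    | zero => simp
    | add y y' hy hy' => simp [add_mul, mul_add, hy, hy']
    | tmul d b => simp [tC_tmul, D.t_mul, mul_comm c d]

lemma tC_sigmaC (x : ℂ ⊗[ℚ] H) : D.tC (sigmaC H x) = sigmaC H (D.tC x) := by
  induction x using TensorProduct.induction_on with
  | zero => simp
  | tmul c a => simp [tC_tmul]
  | add x y hx hy => simp [hx, hy]

lemma BC_tmul (c d : ℂ) (a b : H) : D.BC (c ⊗ₜ[ℚ] a) (d ⊗ₜ[ℚ] b) = c * d * D.B a b := by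
  have hc : ∀ (c : ℂ) (a : H), c ⊗ₜ[ℚ] a = c • inclH H a := fun c a => by
    simp [inclH, TensorProduct.smul_tmul']
  rw [hc c, hc d]
  simp only [map_smul, LinearMap.smul_apply, D.BC_extends, smul_eq_mul]
  ring

lemma BC_mul_left (x y z : ℂ ⊗[ℚ] H) : D.BC (x * y) z = D.BC x (z * D.tC y) := by
  induction x using TensorProduct.induction_on with
  | zero => simp
  | add x x' hx hx' => simp [add_mul, hx, hx']
  | tmul c a =>
    induction y using TensorProduct.induction_on with
    | zero => simp
    | add y y' hy hy' => simp [mul_add, hy, hy']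
    | tmul d b =>
      induction z using TensorProduct.induction_on with
      | zero => simp
      | add z z' hz hz' => simp only [map_add, add_mul, hz, hz']
      | tmul e f =>
        simp only [Algebra.TensorProduct.tmul_mul_tmul, tC_tmul, BC_tmul, D.adj_right]
        ring

lemma exists_hodge_decomp (a : ℂ ⊗[ℚ] H) :
    ∃ a₁ ∈ D.H20, ∃ a₂ ∈ D.H11, ∃ a₃ ∈ D.H02, a = a₁ + a₂ + a₃ := by
  have ha : a ∈ D.H20 ⊔ D.H11 ⊔ D.H02 := D.sup_top ▸ Submodule.mem_top
  obtain ⟨b, hb, a₃, ha₃, rfl⟩ := Submodule.mem_sup.mp ha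
  obtain ⟨a₁, ha₁, a₂, ha₂, rfl⟩ := Submodule.mem_sup.mp hb
  exact ⟨a₁, ha₁, a₂, ha₂, a₃, ha₃, rfl⟩

lemma BC_H20_H20 {a b : ℂ ⊗[ℚ] H} (ha : a ∈ D.H20) (hb : b ∈ D.H20) : D.BC a b = 0 := by
  simpa using D.orth_20_02 a ha _ (D.sigma_20 b hb)

lemma BC_H20_H11 {a b : ℂ ⊗[ℚ] H} (ha : a ∈ D.H20) (hb : b ∈ D.H11) : D.BC a b = 0 := by
  simpa using D.orth_20_11 a ha _ (D.sigma_11 b hb)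

lemma BC_H02_H11 {a b : ℂ ⊗[ℚ] H} (ha : a ∈ D.H02) (hb : b ∈ D.H11) : D.BC a b = 0 := by
  simpa [D.BC_conj] using D.BC_H20_H11 (D.sigma_02 a ha) (D.sigma_11 b hb)

lemma H20_le_W : D.H20 ≤ D.W := D.H20.le_mul_top

lemma mul_mem_W {w : ℂ ⊗[ℚ] H} (hw : w ∈ D.W) (a : ℂ ⊗[ℚ] H) : w * a ∈ D.W := by
  refine Submodule.mul_induction_on hw (fun m hm n _ => ?_) (fun x y hx hy => ?_)
  · rw [mul_assoc]; exact Submodule.mul_mem_mul hm Submodule.mem_top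
  · rw [add_mul]; exact add_mem hx hy

lemma W_eq : D.W = D.H20 ⊔ D.H20 * D.H02 := by
  refine le_antisymm (Submodule.mul_le.mpr fun m hm n _ => ?_)
    (sup_le D.H20_le_W (mul_le_mul_right le_top _))
  obtain ⟨n₁, hn₁, n₂, hn₂, n₃, hn₃, rfl⟩ := D.exists_hodge_decomp n
  rw [mul_add, mul_add, D.mul_20_20 m hm n₁ hn₁, zero_add]
  exact add_mem (Submodule.mem_sup_left (D.mul_20_11 m hm n₂ hn₂))
    (Submodule.mem_sup_right (Submodule.mul_mem_mul hm hn₃))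

lemma H20_mul_H02_le_H11 : D.H20 * D.H02 ≤ D.H11 := Submodule.mul_le.mpr D.mul_20_02

lemma sigmaC_mem_W_of_mem_H02_mul {u : ℂ ⊗[ℚ] H} (hu : u ∈ D.H02 * ⊤) : sigmaC H u ∈ D.W := by
  refine Submodule.mul_induction_on hu (fun m hm n _ => ?_) (fun x y hx hy => ?_)
  · rw [sigmaC_mul]; exact Submodule.mul_mem_mul (D.sigma_02 m hm) Submodule.mem_top
  · rw [map_add]; exact add_mem hx hy

lemma mul_mem_W_sup_H02_mul (a : ℂ ⊗[ℚ] H) {w : ℂ ⊗[ℚ] H} (hw : w ∈ D.W) :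
    a * w ∈ D.W ⊔ D.H02 * ⊤ := by
  refine Submodule.mul_induction_on hw (fun m hm n _ => ?_) (fun x y hx hy => ?_)
  · obtain ⟨a₁, ha₁, a₂, ha₂, a₃, ha₃, rfl⟩ := D.exists_hodge_decomp a
    rw [add_mul, add_mul, ← mul_assoc, D.mul_20_20 a₁ ha₁ m hm, zero_mul, zero_add, ← mul_assoc]
    exact add_mem (Submodule.mem_sup_left (Submodule.mul_mem_mul (D.mul_11_20 a₂ ha₂ m hm)
      Submodule.mem_top)) (Submodule.mem_sup_right (Submodule.mul_mem_mul ha₃ Submodule.mem_top))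
  · rw [mul_add]; exact add_mem hx hy

def WsupSigmaW : Submodule ℚ (ℂ ⊗[ℚ] H) := D.W.restrictScalars ℚ ⊔ D.sigmaW

lemma mem_WsupSigmaW_of_mem_W {w : ℂ ⊗[ℚ] H} (hw : w ∈ D.W) : w ∈ D.WsupSigmaW :=
  Submodule.mem_sup_left hw

lemma sigmaC_mem_WsupSigmaW_of_mem_W {w : ℂ ⊗[ℚ] H} (hw : w ∈ D.W) :
    sigmaC H w ∈ D.WsupSigmaW :=
  Submodule.mem_sup_right (Submodule.mem_map_of_mem hw)

lemma exists_of_mem_WsupSigmaW {x : ℂ ⊗[ℚ] H} (hx : x ∈ D.WsupSigmaW) :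
    ∃ w ∈ D.W, ∃ w' ∈ D.W, x = w + sigmaC H w' := by
  obtain ⟨w, hw, s, hs, rfl⟩ := Submodule.mem_sup.mp hx
  obtain ⟨w', hw', rfl⟩ := Submodule.mem_map.mp hs
  exact ⟨w, hw, w', hw', rfl⟩

lemma sigmaC_mem_WsupSigmaW {x : ℂ ⊗[ℚ] H} (hx : x ∈ D.WsupSigmaW) :
    sigmaC H x ∈ D.WsupSigmaW := by
  obtain ⟨w, hw, w', hw', rfl⟩ := D.exists_of_mem_WsupSigmaW hx
  rw [map_add, sigmaC_sigmaC, add_comm]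
  exact add_mem (D.mem_WsupSigmaW_of_mem_W hw') (D.sigmaC_mem_WsupSigmaW_of_mem_W hw)

lemma W_sup_H02_mul_le_WsupSigmaW : (D.W ⊔ D.H02 * ⊤).restrictScalars ℚ ≤ D.WsupSigmaW := by
  rw [Submodule.restrictScalars_sup]
  refine sup_le le_sup_left fun u hu => ?_
  simpa using D.sigmaC_mem_WsupSigmaW_of_mem_W (D.sigmaC_mem_W_of_mem_H02_mul hu)

lemma mul_mem_WsupSigmaW (a : ℂ ⊗[ℚ] H) {x : ℂ ⊗[ℚ] H} (hx : x ∈ D.WsupSigmaW) :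
    a * x ∈ D.WsupSigmaW ∧ x * a ∈ D.WsupSigmaW := by
  have hleft : ∀ b, ∀ w ∈ D.W, b * w ∈ D.WsupSigmaW := fun b w hw =>
    D.W_sup_H02_mul_le_WsupSigmaW (D.mul_mem_W_sup_H02_mul b hw)
  obtain ⟨w, hw, w', hw', rfl⟩ := D.exists_of_mem_WsupSigmaW hx
  constructor
  · have hσ : a * sigmaC H w' = sigmaC H (sigmaC H a * w') := by rw [sigmaC_mul, sigmaC_sigmaC]
    rw [mul_add, hσ]
    exact add_mem (hleft a w hw) (D.sigmaC_mem_WsupSigmaW (hleft _ w' hw'))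
  · have hσ : sigmaC H w' * a = sigmaC H (w' * sigmaC H a) := by rw [sigmaC_mul, sigmaC_sigmaC]
    rw [add_mul, hσ]
    exact add_mem (D.mem_WsupSigmaW_of_mem_W (D.mul_mem_W hw a))
      (D.sigmaC_mem_WsupSigmaW_of_mem_W (D.mul_mem_W hw' _))

lemma WsupSigmaW_eq_sup_inf_hodge :
    D.WsupSigmaW = (D.WsupSigmaW ⊓ D.H20.restrictScalars ℚ) ⊔
      (D.WsupSigmaW ⊓ D.H11.restrictScalars ℚ) ⊔ (D.WsupSigmaW ⊓ D.H02.restrictScalars ℚ) := by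
  refine le_antisymm (fun x hx => ?_) (sup_le (sup_le inf_le_left inf_le_left) inf_le_left)
  have hmixed : D.H20 * D.H02 ≤ D.W := D.W_eq ▸ le_sup_right
  obtain ⟨w, hw, w', hw', rfl⟩ := D.exists_of_mem_WsupSigmaW hx
  rw [D.W_eq] at hw hw'
  obtain ⟨u, hu, m, hm, rfl⟩ := Submodule.mem_sup.mp hw
  obtain ⟨u', hu', m', hm', rfl⟩ := Submodule.mem_sup.mp hw'
  have h20 : u ∈ D.WsupSigmaW ⊓ D.H20.restrictScalars ℚ :=
    ⟨D.mem_WsupSigmaW_of_mem_W (D.H20_le_W hu), hu⟩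
  have h11 : m + sigmaC H m' ∈ D.WsupSigmaW ⊓ D.H11.restrictScalars ℚ :=
    ⟨add_mem (D.mem_WsupSigmaW_of_mem_W (hmixed hm))
        (D.sigmaC_mem_WsupSigmaW_of_mem_W (hmixed hm')),
      add_mem (D.H20_mul_H02_le_H11 hm) (D.sigma_11 _ (D.H20_mul_H02_le_H11 hm'))⟩
  have h02 : sigmaC H u' ∈ D.WsupSigmaW ⊓ D.H02.restrictScalars ℚ :=
    ⟨D.sigmaC_mem_WsupSigmaW_of_mem_W (D.H20_le_W hu'), D.sigma_20 u' hu'⟩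
  have hsum : u + m + sigmaC H (u' + m') = u + (m + sigmaC H m') + sigmaC H u' := by
    rw [map_add]; abel
  rw [hsum]
  exact add_mem (add_mem (Submodule.mem_sup_left (Submodule.mem_sup_left h20))
    (Submodule.mem_sup_left (Submodule.mem_sup_right h11))) (Submodule.mem_sup_right h02)

abbrev innerCoreH11 : InnerProductSpace.Core ℂ D.H11 where
  inner u v := -D.BC v (sigmaC H u)
  conj_inner_symm u v := by
    rw [map_neg, ← D.BC_conj, sigmaC_sigmaC, D.BC_symm]
  re_inner_nonneg u := by
    rcases eq_or_ne (u : ℂ ⊗[ℚ] H) 0 with hu | hu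
    · simp [hu]
    · simpa using (D.neg_11 u u.2 hu).1.le
  add_left u v w := by simp only [Submodule.coe_add, map_add, neg_add]
  smul_left u v r := by simp only [Submodule.coe_smul, sigmaC_smul, map_smul, smul_eq_mul]; ring
  definite u hu := by
    by_contra hne
    have hre := (D.neg_11 u u.2 (by simpa using hne)).1
    simp_all

lemma BC_H11_component_tC_eq_zero {x x₁ x₂ x₃ n : ℂ ⊗[ℚ] H} (hx : x ∈ D.H20)
    (hx₁ : x₁ ∈ D.H20) (hx₂ : x₂ ∈ D.H11) (hx₃ : x₃ ∈ D.H02) (htC : D.tC x = x₁ + x₂ + x₃)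
    (hn : n ∈ D.H11) (hn_orth : ∀ m ∈ D.H02 * D.H20, D.BC n (sigmaC H m) = 0) :
    D.BC x₂ (sigmaC H n) = 0 := by
  have hσn : sigmaC H n ∈ D.H11 := D.sigma_11 n hn
  have hσnx : sigmaC H n * x ∈ D.H20 := D.mul_11_20 _ hσn x hx
  obtain ⟨e₁, he₁, e₂, he₂, e₃, he₃, hone⟩ := D.exists_hodge_decomp 1
  calc D.BC x₂ (sigmaC H n)
      = D.BC (D.tC x) (sigmaC H n) := by
        rw [htC, map_add, map_add, LinearMap.add_apply, LinearMap.add_apply,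
          D.BC_H20_H11 hx₁ hσn, D.BC_H02_H11 hx₃ hσn, zero_add, add_zero]
    _ = D.BC (sigmaC H n * x) 1 := by rw [BC_mul_left, one_mul, D.BC_symm]
    _ = D.BC (sigmaC H n * x) e₃ := by
        rw [hone, map_add, map_add, D.BC_H20_H20 hσnx he₁, D.BC_H20_H11 hσnx he₂, zero_add,
          zero_add]
    _ = D.BC (sigmaC H n) (e₃ * x₁) := by
        rw [BC_mul_left, htC, mul_add, mul_add, D.mul_02_02 _ he₃ _ hx₃, add_zero, map_add,
          D.BC_symm _ (e₃ * x₂), D.BC_H02_H11 (D.mul_02_11 _ he₃ _ hx₂) hσn, add_zero]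
    _ = starRingEnd ℂ (D.BC n (sigmaC H (e₃ * x₁))) := by rw [← D.BC_conj, sigmaC_sigmaC]
    _ = 0 := by rw [hn_orth _ (Submodule.mul_mem_mul he₃ hx₁), map_zero]

lemma exists_tC_decomp_of_mem_H20 [FiniteDimensional ℚ H] {x : ℂ ⊗[ℚ] H} (hx : x ∈ D.H20) :
    ∃ x₁ ∈ D.H20, ∃ x₂ ∈ D.H02 * D.H20, ∃ x₃ ∈ D.H02, D.tC x = x₁ + x₂ + x₃ := by
  obtain ⟨x₁, hx₁, x₂, hx₂, x₃, hx₃, htC⟩ := D.exists_hodge_decomp (D.tC x)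
  refine ⟨x₁, hx₁, x₂, ?_, x₃, hx₃, htC⟩
  let _ : NormedAddCommGroup D.H11 :=
    @InnerProductSpace.Core.toNormedAddCommGroup _ _ _ _ _ D.innerCoreH11
  let _ : InnerProductSpace ℂ D.H11 := InnerProductSpace.ofCore D.innerCoreH11.toCore
  let K : Submodule ℂ D.H11 := (D.H02 * D.H20).comap D.H11.subtype
  have : CompleteSpace K := FiniteDimensional.complete ℂ K
  suffices (⟨x₂, hx₂⟩ : D.H11) ∈ Kᗮᗮ by rwa [K.orthogonal_orthogonal] at this
  refine (Submodule.mem_orthogonal _ _).mpr fun n hn => neg_eq_zero.mpr ?_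
  refine D.BC_H11_component_tC_eq_zero hx hx₁ hx₂ hx₃ htC n.2 fun m hm => neg_eq_zero.mp ?_
  exact (Submodule.mem_orthogonal _ _).mp hn ⟨m, Submodule.mul_le.mpr D.mul_02_20 hm⟩ hm

lemma tC_mem_WsupSigmaW_of_mem_H20 [FiniteDimensional ℚ H] {x : ℂ ⊗[ℚ] H} (hx : x ∈ D.H20) :
    D.tC x ∈ D.WsupSigmaW := by
  obtain ⟨x₁, hx₁, x₂, hx₂, x₃, hx₃, htC⟩ := D.exists_tC_decomp_of_mem_H20 hx
  refine htC ▸ D.W_sup_H02_mul_le_WsupSigmaW (add_mem (add_mem ?_ ?_) ?_)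
  · exact Submodule.mem_sup_left (D.H20_le_W hx₁)
  · exact Submodule.mem_sup_right (mul_le_mul_right le_top D.H02 hx₂)
  · exact Submodule.mem_sup_right (D.H02.le_mul_top hx₃)

lemma tC_mem_WsupSigmaW [FiniteDimensional ℚ H] {x : ℂ ⊗[ℚ] H} (hx : x ∈ D.WsupSigmaW) :
    D.tC x ∈ D.WsupSigmaW := by
  have hW : ∀ w ∈ D.W, D.tC w ∈ D.WsupSigmaW := fun w hw => by
    refine Submodule.mul_induction_on hw (fun m hm n _ => ?_) (fun y z hy hz => ?_)
    · rw [tC_mul]; exact (D.mul_mem_WsupSigmaW _ (D.tC_mem_WsupSigmaW_of_mem_H20 hm)).1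
    · rw [map_add]; exact add_mem hy hz
  obtain ⟨w, hw, w', hw', rfl⟩ := D.exists_of_mem_WsupSigmaW hx
  rw [map_add, tC_sigmaC]
  exact add_mem (hW w hw) (D.sigmaC_mem_WsupSigmaW (hW w' hw'))

end HodgeAlgebraData

/-- `W + σ(W)` is a two-sided ideal of the `ℂ`-algebra `H_ℂ`. Moreover
`W = H^{2,0} + H^{2,0}·H^{0,2}` with `H^{2,0}·H^{0,2} ⊆ H^{1,1}`, so that `W + σ(W)` is the
direct sum of its intersections with `H^{2,0}`, `H^{1,1}` and `H^{0,2}` (it is stable under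
the Hodge decomposition), and `t(W + σ(W)) ⊆ W + σ(W)`. -/
theorem W_plus_sigmaW_two_sided_ideal (D : HodgeAlgebraData H) :
    (∀ x ∈ (D.W.restrictScalars ℚ) ⊔ D.sigmaW, ∀ a : ℂ ⊗[ℚ] H,
        a * x ∈ (D.W.restrictScalars ℚ) ⊔ D.sigmaW ∧
        x * a ∈ (D.W.restrictScalars ℚ) ⊔ D.sigmaW) ∧
    D.W = D.H20 ⊔ D.H20 * D.H02 ∧
    D.H20 * D.H02 ≤ D.H11 ∧
    (D.W.restrictScalars ℚ) ⊔ D.sigmaW =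
      (((D.W.restrictScalars ℚ) ⊔ D.sigmaW) ⊓ D.H20.restrictScalars ℚ) ⊔
      (((D.W.restrictScalars ℚ) ⊔ D.sigmaW) ⊓ D.H11.restrictScalars ℚ) ⊔
      (((D.W.restrictScalars ℚ) ⊔ D.sigmaW) ⊓ D.H02.restrictScalars ℚ) ∧
    (∀ x ∈ (D.W.restrictScalars ℚ) ⊔ D.sigmaW,
        D.tC x ∈ (D.W.restrictScalars ℚ) ⊔ D.sigmaW) :=
  ⟨fun _ hx a => D.mul_mem_WsupSigmaW a hx, D.W_eq, D.H20_mul_H02_le_H11,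
    D.WsupSigmaW_eq_sup_inf_hodge, fun _ hx => D.tC_mem_WsupSigmaW hx⟩
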